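/- Let h > 1, R = √(h(h−1)), and let γ : [0,2π] → ℝ² be the counterclockwise parametrization γ(t) = (R cos t, h + R sin t) of the oval {H = h} (along which 2y − 1 ≠ 0). Then: ∫_γ ω₁ = ∫_γ ω₃ = −2πh(h−1), ∫_γ ω₂ = 0, ∫_γ ω₄ = 0, and ∫_γ ω₅ = 4π(h−1). Consequently, for any λ₁,…,λ₅ ∈ ℝ, ∫_γ (λ₁ω₁ + λ₂ω₂ + λ₃ω₃ + λ₄ω₄ + λ₅ω₅) = −2π(h−1)[h(λ₁+λ₃) − 2λ₅]; up to normalization and orientation this is the first Melnikov function M̃₁(h) = 2π(h−1)[(h−1)(λ₁+λ₃) + λ₁ + λ₃ − 2λ₅] of the second period annulus. -/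

import Mathlib

/-!
On the oval `x² + y² = h(2y − 1)` the velocity of `γ` is `(h − y, x)`, so each `ωᵢ(γ')` is a
partial fraction `A + B (y − h) + C/(2y − 1) + E/(2y − 1)² + x G(y)` in the point of the oval.
Along `γ` the terms `B (y − h) = B R sin t` and `x G(y) = G(y) y'` integrate to zero over a
period, while `2y − 1 = a + b sin t` with `a = 2h − 1`, `b = 2R` and `a² − b² = 1`, so the
classical integrals `∫ dt/(a + b sin t) = 2π/√(a² − b²)` and
`∫ dt/(a + b sin t)² = 2πa/√(a² − b²)³` contribute `2πC` and `2π(2h − 1)E`.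
-/

open Real Set intervalIntegral

theorem integral_comp_mul_deriv_eq_zero_of_eq {a b : ℝ} {f f' g : ℝ → ℝ}
    (hf : ∀ x ∈ uIcc a b, HasDerivAt f (f' x) x) (hf' : ContinuousOn f' (uIcc a b))
    (hg : ContinuousOn g (f '' uIcc a b)) (hab : f a = f b) :
    ∫ x in a..b, g (f x) * f' x = 0 := by
  simpa [hab] using integral_comp_mul_deriv' hf hf' hg

section AddMulSin

variable {a b : ℝ}

lemma add_mul_sin_pos (hab : |b| < a) (t : ℝ) : 0 < a + b * sin t := by
  have : |b * sin t| ≤ |b| := by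
    rw [abs_mul]
    exact mul_le_of_le_one_right (abs_nonneg b) (abs_sin_le_one t)
  linarith [neg_abs_le (b * sin t)]

lemma sq_lt_sq_of_abs_lt (hab : |b| < a) : b ^ 2 < a ^ 2 :=
  sq_lt_sq' (abs_lt.mp hab).1 (abs_lt.mp hab).2

-- With `c = √(a² − b²)`, `2 arctan (b cos t / (a + c + b sin t))` has derivative
-- `c / (a + b sin t) − 1`; unlike the half-angle substitution it is smooth on all of `ℝ`.
lemma hasDerivAt_primitive_inv_add_mul_sin (hab : |b| < a) (t : ℝ) :
    HasDerivAt (fun t => (t + 2 * arctan (b * cos t / (a + √(a ^ 2 - b ^ 2) + b * sin t)))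
        / √(a ^ 2 - b ^ 2)) (a + b * sin t)⁻¹ t := by
  set c := √(a ^ 2 - b ^ 2)
  have hb := sq_lt_sq_of_abs_lt hab
  have hc : c ^ 2 = a ^ 2 - b ^ 2 := sq_sqrt (by linarith)
  have hc0 : 0 < c := sqrt_pos.mpr (by linarith)
  have hD := add_mul_sin_pos hab t
  have hE : 0 < a + c + b * sin t := by linarith
  have H : HasDerivAt (fun t => (t + 2 * arctan (b * cos t / (a + c + b * sin t))) / c) _ t :=
    ((hasDerivAt_id t).add ((((hasDerivAt_cos t).const_mul b).div
      (((hasDerivAt_sin t).const_mul b).const_add (a + c)) hE.ne').arctan.const_mul 2)).div_const c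
  convert H using 1
  simp only [Pi.div_apply]
  field_simp
  linear_combination (c + (a + b * sin t)) * (b ^ 2 * sin_sq_add_cos_sq t + hc)

theorem integral_inv_add_mul_sin (hab : |b| < a) :
    ∫ t in (0)..2 * π, (a + b * sin t)⁻¹ = 2 * π / √(a ^ 2 - b ^ 2) := by
  have hcont : Continuous fun t => (a + b * sin t)⁻¹ :=
    (by fun_prop : Continuous fun t => a + b * sin t).inv₀ fun t => (add_mul_sin_pos hab t).ne'
  rw [integral_eq_sub_of_hasDerivAt (fun t _ => hasDerivAt_primitive_inv_add_mul_sin hab t)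
    (hcont.intervalIntegrable _ _)]
  simp [sin_two_pi, cos_two_pi]
  ring

-- `(a² − b²)/(a + b sin t)² = a/(a + b sin t) + b · d/dt (cos t/(a + b sin t))`.
lemma hasDerivAt_primitive_inv_add_mul_sin_sq (hab : |b| < a) (t : ℝ) :
    HasDerivAt (fun t => (a * ((t + 2 * arctan (b * cos t / (a + √(a ^ 2 - b ^ 2) + b * sin t)))
        / √(a ^ 2 - b ^ 2)) + b * (cos t / (a + b * sin t))) / (a ^ 2 - b ^ 2))
      ((a + b * sin t) ^ 2)⁻¹ t := by
  have hb : a ^ 2 - b ^ 2 ≠ 0 := by linarith [sq_lt_sq_of_abs_lt hab]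
  have hD := add_mul_sin_pos hab t
  have H : HasDerivAt (fun t => (a * ((t + 2 * arctan (b * cos t
        / (a + √(a ^ 2 - b ^ 2) + b * sin t))) / √(a ^ 2 - b ^ 2))
        + b * (cos t / (a + b * sin t))) / (a ^ 2 - b ^ 2)) _ t :=
    (((hasDerivAt_primitive_inv_add_mul_sin hab t).const_mul a).add (((hasDerivAt_cos t).div
      (((hasDerivAt_sin t).const_mul b).const_add a) hD.ne').const_mul b)).div_const _
  convert H using 1
  field_simp
  linear_combination b ^ 2 * sin_sq_add_cos_sq t

theorem integral_inv_add_mul_sin_sq (hab : |b| < a) :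
    ∫ t in (0)..2 * π, ((a + b * sin t) ^ 2)⁻¹ = 2 * π * a / √(a ^ 2 - b ^ 2) ^ 3 := by
  have hb := sq_lt_sq_of_abs_lt hab
  have hcont : Continuous fun t => ((a + b * sin t) ^ 2)⁻¹ :=
    (by fun_prop : Continuous fun t => (a + b * sin t) ^ 2).inv₀
      fun t => (pow_pos (add_mul_sin_pos hab t) 2).ne'
  rw [integral_eq_sub_of_hasDerivAt (fun t _ => hasDerivAt_primitive_inv_add_mul_sin_sq hab t)
    (hcont.intervalIntegrable _ _)]
  have hc : √(a ^ 2 - b ^ 2) ^ 2 = a ^ 2 - b ^ 2 := sq_sqrt (by linarith)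
  have hc0 : 0 < √(a ^ 2 - b ^ 2) := sqrt_pos.mpr (by linarith)
  have ha : 0 < a := (abs_nonneg b).trans_lt hab
  have hne : a ^ 2 - b ^ 2 ≠ 0 := by linarith
  simp [sin_two_pi, cos_two_pi]
  field_simp
  rw [hc]
  field_simp
  ring

theorem integral_add_mul_sin_partial_fraction (hab : |b| < a) (A B C E : ℝ) {G : ℝ → ℝ}
    (hG : ContinuousOn G (Icc (-1) 1)) :
    ∫ t in (0)..2 * π, (A + B * sin t + C * (a + b * sin t)⁻¹ + E * ((a + b * sin t) ^ 2)⁻¹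
        + G (sin t) * cos t)
      = 2 * π * (A + C / √(a ^ 2 - b ^ 2) + E * a / √(a ^ 2 - b ^ 2) ^ 3) := by
  have hc1 : Continuous fun t => (a + b * sin t)⁻¹ :=
    (by fun_prop : Continuous fun t => a + b * sin t).inv₀ fun t => (add_mul_sin_pos hab t).ne'
  have hc2 : Continuous fun t => ((a + b * sin t) ^ 2)⁻¹ :=
    (by fun_prop : Continuous fun t => (a + b * sin t) ^ 2).inv₀
      fun t => (pow_pos (add_mul_sin_pos hab t) 2).ne'
  have hsin_mem (t : ℝ) : sin t ∈ Icc (-1) 1 := ⟨neg_one_le_sin t, sin_le_one t⟩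
  have hcG : Continuous fun t => G (sin t) := hG.comp_continuous continuous_sin hsin_mem
  have hexact : ∫ t in (0)..2 * π, G (sin t) * cos t = 0 :=
    integral_comp_mul_deriv_eq_zero_of_eq (fun t _ => hasDerivAt_sin t)
      continuous_cos.continuousOn (hG.mono (image_subset_iff.mpr fun t _ => hsin_mem t))
      (by simp)
  rw [integral_add, integral_add, integral_add, integral_add, integral_const_mul,
    integral_const_mul, integral_const_mul, integral_inv_add_mul_sin hab,
    integral_inv_add_mul_sin_sq hab, hexact]
  · simp
    ring
  all_goals
    exact Continuous.intervalIntegrable (by first | fun_prop | exact hcG.mul continuous_cos) _ _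

end AddMulSin

section Oval

variable {h : ℝ}

lemma sq_sqrt_mul_sub_one (hh : 1 < h) : √(h * (h - 1)) ^ 2 = h * (h - 1) :=
  sq_sqrt (by nlinarith)

lemma abs_two_mul_sqrt_lt (hh : 1 < h) : |2 * √(h * (h - 1))| < 2 * h - 1 := by
  have hR := sq_sqrt_mul_sub_one hh
  rw [abs_of_nonneg (by positivity)]
  nlinarith [sqrt_nonneg (h * (h - 1))]

lemma sqrt_sq_sub_sq_eq_one (hh : 1 < h) :
    √((2 * h - 1) ^ 2 - (2 * √(h * (h - 1))) ^ 2) = 1 := by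
  rw [mul_pow, sq_sqrt_mul_sub_one hh]
  ring_nf
  exact sqrt_one

lemma oval_two_mul_sub_one_pos (hh : 1 < h) (t : ℝ) :
    0 < 2 * (h + √(h * (h - 1)) * sin t) - 1 := by
  linarith [add_mul_sin_pos (abs_two_mul_sqrt_lt hh) t]

noncomputable def ovalLineIntegral (h : ℝ) (P Q : ℝ → ℝ → ℝ) : ℝ :=
  ∫ t in (0)..2 * π,
    (P (√(h * (h - 1)) * cos t) (h + √(h * (h - 1)) * sin t)
        * deriv (fun t => √(h * (h - 1)) * cos t) t
      + Q (√(h * (h - 1)) * cos t) (h + √(h * (h - 1)) * sin t)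
        * deriv (fun t => h + √(h * (h - 1)) * sin t) t)

theorem ovalLineIntegral_eq (hh : 1 < h) {P Q : ℝ → ℝ → ℝ} (A B C E : ℝ) (G : ℝ → ℝ)
    (hG : ContinuousOn G (Ioi (1 / 2)))
    (hPQ : ∀ x y, x ^ 2 + y ^ 2 = h * (2 * y - 1) → 2 * y - 1 ≠ 0 →
      P x y * (h - y) + Q x y * x
        = A + B * (y - h) + C / (2 * y - 1) + E / (2 * y - 1) ^ 2 + x * G y) :
    ovalLineIntegral h P Q = 2 * π * (A + C + (2 * h - 1) * E) := by
  rw [ovalLineIntegral]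
  set R := √(h * (h - 1))
  have hab : |2 * R| < 2 * h - 1 := abs_two_mul_sqrt_lt hh
  have hGR : ContinuousOn (fun s => R * G (h + R * s)) (Icc (-1) 1) := by
    refine continuousOn_const.mul (hG.comp (by fun_prop) fun s hs => ?_)
    rw [mem_Ioi]
    nlinarith [hs.1, (abs_lt.mp hab).2, sqrt_nonneg (h * (h - 1))]
  have hcongr : EqOn (fun t => P (R * cos t) (h + R * sin t) * deriv (fun t => R * cos t) t
          + Q (R * cos t) (h + R * sin t) * deriv (fun t => h + R * sin t) t)
      (fun t => A + B * R * sin t + C * (2 * h - 1 + 2 * R * sin t)⁻¹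
          + E * ((2 * h - 1 + 2 * R * sin t) ^ 2)⁻¹ + R * G (h + R * sin t) * cos t)
      (uIcc 0 (2 * π)) := by
    intro t _
    have hoval : (R * cos t) ^ 2 + (h + R * sin t) ^ 2 = h * (2 * (h + R * sin t) - 1) := by
      linear_combination R ^ 2 * cos_sq_add_sin_sq t + sq_sqrt_mul_sub_one hh
    have hD : 2 * (h + R * sin t) - 1 = 2 * h - 1 + 2 * R * sin t := by ring
    beta_reduce
    rw [((hasDerivAt_cos t).const_mul R).deriv,
      (((hasDerivAt_sin t).const_mul R).const_add h).deriv,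
      show R * -sin t = h - (h + R * sin t) by ring,
      hPQ _ _ hoval (hD ▸ (add_mul_sin_pos hab t).ne'), hD]
    ring
  rw [integral_congr hcongr, integral_add_mul_sin_partial_fraction hab A (B * R) C E hGR,
    sqrt_sq_sub_sq_eq_one hh]
  ring

end Oval

section OnOval

variable {h x y : ℝ}

lemma omega₁_apply_tangent (hxy : x ^ 2 + y ^ 2 = h * (2 * y - 1)) (hD : 2 * y - 1 ≠ 0) :
    -y / (2 * y - 1) ^ 2 * (h - y) + x / (2 * y - 1) ^ 2 * x
      = h / 2 / (2 * y - 1) - h / 2 / (2 * y - 1) ^ 2 := by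
  -- `field_simp` asks for the nonvanishing of its normal form `y * 2 - 1`.
  have hD' : y * 2 - 1 ≠ 0 := by rwa [mul_comm]
  field_simp
  linear_combination 2 * hxy

lemma omega₂_apply_tangent (hxy : x ^ 2 + y ^ 2 = h * (2 * y - 1)) (hD : 2 * y - 1 ≠ 0) :
    (x ^ 2 + y ^ 2) / (2 * y - 1) ^ 2 * x = x * (h / (2 * y - 1)) := by
  have hD' : y * 2 - 1 ≠ 0 := by rwa [mul_comm]
  field_simp
  linear_combination x * hxy

lemma omega₃_apply_tangent (hxy : x ^ 2 + y ^ 2 = h * (2 * y - 1)) (hD : 2 * y - 1 ≠ 0) :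
    -(x ^ 2 + y ^ 2) / (2 * y - 1) ^ 2 * (h - y)
      = h / 2 - h * (2 * h - 1) / 2 / (2 * y - 1) := by
  have hD' : y * 2 - 1 ≠ 0 := by rwa [mul_comm]
  field_simp
  linear_combination -2 * (h - y) * hxy

lemma omega₄_apply_tangent (hxy : x ^ 2 + y ^ 2 = h * (2 * y - 1)) (hD : 2 * y - 1 ≠ 0) :
    2 * x * y / (2 * y - 1) ^ 2 * (h - y) + (x ^ 2 - y ^ 2) / (2 * y - 1) ^ 2 * x
      = x * ((4 * h * y - 4 * y ^ 2 - h) / (2 * y - 1) ^ 2) := by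
  have hD' : y * 2 - 1 ≠ 0 := by rwa [mul_comm]
  field_simp
  linear_combination x * hxy

lemma omega₅_apply_tangent (hxy : x ^ 2 + y ^ 2 = h * (2 * y - 1)) (hD : 2 * y - 1 ≠ 0) :
    -(x ^ 2 - y ^ 2) / (2 * y - 1) ^ 2 * (h - y) + 2 * x * y / (2 * y - 1) ^ 2 * x
      = h - 1 - (y - h) - (h - 1) * (2 * h - 3) / 2 / (2 * y - 1)
        + (h - 1) / 2 / (2 * y - 1) ^ 2 := by
  have hD' : y * 2 - 1 ≠ 0 := by rwa [mul_comm]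
  field_simp
  linear_combination (6 * y - 2 * h) * hxy

end OnOval

/-- First Melnikov function of the second period annulus: for `h > 1`, along
the counterclockwise parametrization `γ(t) = (R cos t, h + R sin t)`,
`R = √(h(h−1))`, of the oval `{H = h}` (on which `2y − 1 ≠ 0`), the integrals
of `ω₁, …, ω₅` are `−2πh(h−1), 0, −2πh(h−1), 0, 4π(h−1)`; hence
`∫ λ₁ω₁ + ⋯ + λ₅ω₅ = −2π(h−1)[h(λ₁+λ₃) − 2λ₅]`. -/
theorem first_melnikov_second_annulus (h : ℝ) (hh : 1 < h) (l1 l2 l3 l4 l5 : ℝ) :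
    let R := Real.sqrt (h * (h - 1))
    let γ₁ : ℝ → ℝ := fun t => R * Real.cos t
    let γ₂ : ℝ → ℝ := fun t => h + R * Real.sin t
    let lineInt : (ℝ → ℝ → ℝ) → (ℝ → ℝ → ℝ) → ℝ := fun P Q =>
      ∫ t in (0 : ℝ)..(2 * π),
        (P (γ₁ t) (γ₂ t) * deriv γ₁ t + Q (γ₁ t) (γ₂ t) * deriv γ₂ t)
    (∀ t : ℝ, 2 * γ₂ t - 1 ≠ 0)
    -- ω₁ = (x dy − y dx)/(2y−1)²
    ∧ lineInt (fun _ y => -y / (2 * y - 1) ^ 2) (fun x y => x / (2 * y - 1) ^ 2)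
        = -(2 * π * h * (h - 1))
    -- ω₂ = (x²+y²) dy/(2y−1)²
    ∧ lineInt (fun _ _ => 0) (fun x y => (x ^ 2 + y ^ 2) / (2 * y - 1) ^ 2) = 0
    -- ω₃ = −(x²+y²) dx/(2y−1)²
    ∧ lineInt (fun x y => -(x ^ 2 + y ^ 2) / (2 * y - 1) ^ 2) (fun _ _ => 0)
        = -(2 * π * h * (h - 1))
    -- ω₄ = ((x²−y²) dy + 2xy dx)/(2y−1)²
    ∧ lineInt (fun x y => 2 * x * y / (2 * y - 1) ^ 2)
        (fun x y => (x ^ 2 - y ^ 2) / (2 * y - 1) ^ 2) = 0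
    -- ω₅ = (2xy dy − (x²−y²) dx)/(2y−1)²
    ∧ lineInt (fun x y => -(x ^ 2 - y ^ 2) / (2 * y - 1) ^ 2)
        (fun x y => 2 * x * y / (2 * y - 1) ^ 2) = 4 * π * (h - 1)
    -- the combination λ₁ω₁ + λ₂ω₂ + λ₃ω₃ + λ₄ω₄ + λ₅ω₅
    ∧ lineInt
        (fun x y => l1 * (-y / (2 * y - 1) ^ 2)
          + l3 * (-(x ^ 2 + y ^ 2) / (2 * y - 1) ^ 2)
          + l4 * (2 * x * y / (2 * y - 1) ^ 2)
          + l5 * (-(x ^ 2 - y ^ 2) / (2 * y - 1) ^ 2))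
        (fun x y => l1 * (x / (2 * y - 1) ^ 2)
          + l2 * ((x ^ 2 + y ^ 2) / (2 * y - 1) ^ 2)
          + l4 * ((x ^ 2 - y ^ 2) / (2 * y - 1) ^ 2)
          + l5 * (2 * x * y / (2 * y - 1) ^ 2))
      = -(2 * π * (h - 1) * (h * (l1 + l3) - 2 * l5)) := by
  intro R γ₁ γ₂ lineInt
  have hline : lineInt = ovalLineIntegral h := rfl
  have hG₂ : ContinuousOn (fun y => h / (2 * y - 1)) (Ioi (1 / 2)) :=
    continuousOn_const.div (by fun_prop) fun y hy => by linarith [mem_Ioi.mp hy]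
  have hG₄ : ContinuousOn (fun y => (4 * h * y - 4 * y ^ 2 - h) / (2 * y - 1) ^ 2) (Ioi (1 / 2)) :=
    (by fun_prop : Continuous _).continuousOn.div (by fun_prop) fun y hy => by
      nlinarith [mem_Ioi.mp hy]
  rw [hline]
  refine ⟨fun t => (oval_two_mul_sub_one_pos hh t).ne', ?_, ?_, ?_, ?_, ?_, ?_⟩
  · refine (ovalLineIntegral_eq hh 0 0 (h / 2) (-(h / 2)) (fun _ => 0) continuousOn_const
      fun x y hxy hD => ?_).trans (by ring)
    linear_combination omega₁_apply_tangent hxy hD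
  · refine (ovalLineIntegral_eq hh 0 0 0 0 _ hG₂ fun x y hxy hD => ?_).trans (by ring)
    linear_combination omega₂_apply_tangent hxy hD
  · refine (ovalLineIntegral_eq hh (h / 2) 0 (-(h * (2 * h - 1) / 2)) 0 (fun _ => 0)
      continuousOn_const fun x y hxy hD => ?_).trans (by ring)
    linear_combination omega₃_apply_tangent hxy hD
  · refine (ovalLineIntegral_eq hh 0 0 0 0 _ hG₄ fun x y hxy hD => ?_).trans (by ring)
    linear_combination omega₄_apply_tangent hxy hD
  · refine (ovalLineIntegral_eq hh (h - 1) (-1) (-((h - 1) * (2 * h - 3) / 2)) ((h - 1) / 2)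
      (fun _ => 0) continuousOn_const fun x y hxy hD => ?_).trans (by ring)
    linear_combination omega₅_apply_tangent hxy hD
  · refine (ovalLineIntegral_eq hh (l3 * (h / 2) + l5 * (h - 1)) (-l5)
      (l1 * (h / 2) - l3 * (h * (2 * h - 1) / 2) - l5 * ((h - 1) * (2 * h - 3) / 2))
      (-(l1 * (h / 2)) + l5 * ((h - 1) / 2))
      (fun y => l2 * (h / (2 * y - 1)) + l4 * ((4 * h * y - 4 * y ^ 2 - h) / (2 * y - 1) ^ 2))
      ((continuousOn_const.mul hG₂).add (continuousOn_const.mul hG₄))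
      fun x y hxy hD => ?_).trans (by ring)
    linear_combination l1 * omega₁_apply_tangent hxy hD + l2 * omega₂_apply_tangent hxy hD
      + l3 * omega₃_apply_tangent hxy hD + l4 * omega₄_apply_tangent hxy hD
      + l5 * omega₅_apply_tangent hxy hD
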